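/- arXiv:2602.11662 — 3 statements merged into one kernel-verified Lean document; each statement's English description precedes it below -/
import Mathlib

section
/- Let V ∈ ℝ^{n×n} be symmetric with nonnegative entries, a > 0, and Y ∈ ℝ^{n×d} with rows y_1,…,y_n. Then the Cauchy-kernel attractive term satisfies the error bound |∑_{i≠j} v_{ij} log(1 + a‖y_i − y_j‖²) − 2a · tr(Yᵀ L(V) Y)| ≤ (a²/2) · ∑_{i≠j} v_{ij} ‖y_i − y_j‖⁴, where L(V) = D_V − V is the combinatorial graph Laplacian. -/
open Matrix

/-- The diagonal degree matrix `D_W` with `(D_W)_{ii} = ∑_j W_{ij}`. -/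
noncomputable def degreeMatrix {n : ℕ} (W : Matrix (Fin n) (Fin n) ℝ) :
    Matrix (Fin n) (Fin n) ℝ :=
  Matrix.diagonal fun i => ∑ j, W i j

/-- The combinatorial graph Laplacian `L(W) = D_W - W`. -/
noncomputable def lap {n : ℕ} (W : Matrix (Fin n) (Fin n) ℝ) :
    Matrix (Fin n) (Fin n) ℝ :=
  degreeMatrix W - W

/-- The squared Euclidean distance `‖Z_i - Z_j‖²` between rows `i` and `j` of `Z`. -/
noncomputable def rowDistSq {n d : ℕ} (Z : Matrix (Fin n) (Fin d) ℝ) (i j : Fin n) : ℝ :=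
  ‖(EuclideanSpace.equiv (Fin d) ℝ).symm (fun k => Z i k - Z j k)‖ ^ 2

/-! For symmetric `V`, `2 tr(Yᵀ L(V) Y) = ∑_{i,j} v_{ij} ‖y_i - y_j‖²`, so the left-hand side is
`|∑_{i≠j} v_{ij} (log (1 + x_{ij}) - x_{ij})|` with `x_{ij} = a ‖y_i - y_j‖² ≥ 0`, and each term is
controlled by `x - x² / 2 ≤ log (1 + x) ≤ x`. -/

lemma rowDistSq_eq_sum {n d : ℕ} (Z : Matrix (Fin n) (Fin d) ℝ) (i j : Fin n) :
    rowDistSq Z i j = ∑ k, (Z i k - Z j k) ^ 2 := by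
  rw [rowDistSq, EuclideanSpace.norm_eq, Real.sq_sqrt (by positivity)]
  simp [sq_abs]

lemma rowDistSq_nonneg {n d : ℕ} (Z : Matrix (Fin n) (Fin d) ℝ) (i j : Fin n) :
    0 ≤ rowDistSq Z i j := by
  rw [rowDistSq]
  positivity

lemma rowDistSq_self {n d : ℕ} (Z : Matrix (Fin n) (Fin d) ℝ) (i : Fin n) :
    rowDistSq Z i i = 0 := by
  simp [rowDistSq_eq_sum]

lemma Real.abs_log_one_add_sub_self_le {x : ℝ} (hx : 0 ≤ x) :
    |Real.log (1 + x) - x| ≤ x ^ 2 / 2 := by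
  have upper : Real.log (1 + x) ≤ x := by
    linarith [Real.log_le_sub_one_of_pos (by linarith : (0 : ℝ) < 1 + x)]
  -- `2x / (x + 2) - (x - x² / 2) = x³ / (2 (x + 2)) ≥ 0`
  have lower : x - x ^ 2 / 2 ≤ 2 * x / (x + 2) := by
    rw [le_div_iff₀ (by linarith)]
    nlinarith [pow_nonneg hx 3]
  rw [abs_le]
  constructor <;> linarith [Real.le_log_one_add_of_nonneg hx]

lemma Matrix.trace_transpose_mul_mul {m n R : Type*} [Fintype m] [Fintype n] [CommSemiring R]
    (A : Matrix m m R) (Y : Matrix m n R) :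
    trace (Yᵀ * A * Y) = ∑ k, Yᵀ k ⬝ᵥ A *ᵥ Yᵀ k := by
  simp only [trace, diag_apply, Matrix.mul_assoc, mul_apply, dotProduct, mulVec,
    transpose_apply]

lemma two_mul_dotProduct_lap_mulVec {n : ℕ} {V : Matrix (Fin n) (Fin n) ℝ} (hV : V.IsSymm)
    (x : Fin n → ℝ) :
    2 * (x ⬝ᵥ lap V *ᵥ x) = ∑ i, ∑ j, V i j * (x i - x j) ^ 2 := by
  have swap : ∑ i, ∑ j, V i j * x j ^ 2 = ∑ i, ∑ j, V i j * x i ^ 2 := by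
    rw [Finset.sum_comm]
    simp only [hV.apply]
  have degree_term : x ⬝ᵥ (diagonal fun i => ∑ j, V i j) *ᵥ x = ∑ i, ∑ j, V i j * x i ^ 2 := by
    simp only [dotProduct, mulVec_diagonal, Finset.mul_sum, Finset.sum_mul]
    exact Finset.sum_congr rfl fun i _ => Finset.sum_congr rfl fun j _ => by ring
  have adjacency_term : x ⬝ᵥ V *ᵥ x = ∑ i, ∑ j, V i j * x i * x j := by
    simp only [dotProduct, mulVec, Finset.mul_sum]
    exact Finset.sum_congr rfl fun i _ => Finset.sum_congr rfl fun j _ => by ring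
  have expand : ∀ i j, V i j * (x i - x j) ^ 2
      = V i j * x i ^ 2 - 2 * (V i j * x i * x j) + V i j * x j ^ 2 := fun i j => by ring
  rw [lap, degreeMatrix, sub_mulVec, dotProduct_sub, degree_term, adjacency_term]
  simp only [expand, Finset.sum_add_distrib, Finset.sum_sub_distrib, swap, ← Finset.mul_sum]
  ring

lemma two_mul_trace_transpose_mul_lap_mul {n d : ℕ} {V : Matrix (Fin n) (Fin n) ℝ}
    (hV : V.IsSymm) (Y : Matrix (Fin n) (Fin d) ℝ) :
    2 * trace (Yᵀ * lap V * Y) = ∑ i, ∑ j, V i j * rowDistSq Y i j := by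
  simp only [trace_transpose_mul_mul, Finset.mul_sum, two_mul_dotProduct_lap_mulVec hV,
    rowDistSq_eq_sum, transpose_apply]
  rw [Finset.sum_comm]
  exact Finset.sum_congr rfl fun i _ => Finset.sum_comm

/-- for symmetric nonnegative `V` and `a > 0`, the Cauchy-kernel
attractive term satisfies
`|∑_{i≠j} v_{ij} log(1 + a‖y_i − y_j‖²) − 2a·tr(Yᵀ L(V) Y)|
  ≤ (a²/2)·∑_{i≠j} v_{ij} ‖y_i − y_j‖⁴`. -/
theorem umap_cauchy_attraction_error_bound {n d : ℕ}
    (V : Matrix (Fin n) (Fin n) ℝ) (hsymm : V.IsSymm) (hnonneg : ∀ i j, 0 ≤ V i j)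
    (a : ℝ) (ha : 0 < a) (Y : Matrix (Fin n) (Fin d) ℝ) :
    |(∑ i, ∑ j ∈ Finset.univ.filter (fun j => j ≠ i),
          V i j * Real.log (1 + a * rowDistSq Y i j))
        - 2 * a * Matrix.trace (Yᵀ * lap V * Y)|
      ≤ a ^ 2 / 2 * ∑ i, ∑ j ∈ Finset.univ.filter (fun j => j ≠ i),
          V i j * (rowDistSq Y i j) ^ 2 := by
  have sum_off_diagonal : ∀ f : Fin n → Fin n → ℝ, (∀ i, f i i = 0) →
      ∑ i, ∑ j ∈ Finset.univ.filter (fun j => j ≠ i), f i j = ∑ i, ∑ j, f i j :=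
    fun f hf => Finset.sum_congr rfl fun i _ => by
      rw [Finset.filter_ne', Finset.sum_erase _ (hf i)]
  have pairwise_error : ∀ i j, |V i j * Real.log (1 + a * rowDistSq Y i j)
      - a * (V i j * rowDistSq Y i j)| ≤ a ^ 2 / 2 * (V i j * rowDistSq Y i j ^ 2) := by
    intro i j
    rw [mul_left_comm a, ← mul_sub, abs_mul, abs_of_nonneg (hnonneg i j)]
    calc _ ≤ V i j * ((a * rowDistSq Y i j) ^ 2 / 2) :=
          mul_le_mul_of_nonneg_left
            (Real.abs_log_one_add_sub_self_le (mul_nonneg ha.le (rowDistSq_nonneg Y i j)))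
            (hnonneg i j)
      _ = _ := by ring
  rw [sum_off_diagonal _ fun i => by simp [rowDistSq_self],
    sum_off_diagonal _ fun i => by simp [rowDistSq_self], mul_assoc, mul_left_comm,
    two_mul_trace_transpose_mul_lap_mul hsymm]
  simp only [Finset.mul_sum, ← Finset.sum_sub_distrib]
  calc _ ≤ ∑ i, ∑ j, |V i j * Real.log (1 + a * rowDistSq Y i j)
          - a * (V i j * rowDistSq Y i j)| :=
        (Finset.abs_sum_le_sum_abs _ _).trans
          (Finset.sum_le_sum fun i _ => Finset.abs_sum_le_sum_abs _ _)
    _ ≤ _ := Finset.sum_le_sum fun i _ => Finset.sum_le_sum fun j _ => pairwise_error i j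
end

section
/- Let d_1, …, d_k ≥ 0 be distances, let ρ ≥ 0, and suppose at least one d_j > ρ. Define f : (0,∞) → ℝ by f(σ) = ∑_{j=1}^k exp(−max(0, d_j − ρ)/σ), and let m = #{j : d_j ≤ ρ}. Then f is continuous and strictly monotonically increasing on (0,∞), f(σ) → m as σ → 0⁺, and f(σ) → k as σ → ∞. Consequently, for every target value t with m < t < k, there exists a unique σ > 0 with f(σ) = t. -/
/-!
Each summand `exp (-c / σ)` with `c ≥ 0` is nondecreasing in `σ > 0`, strictly if `c > 0`; it
tends to `1` as `σ → ∞`, and as `σ → 0⁺` to `1` if `c = 0` and to `0` if `c > 0`. A continuous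
strictly increasing function on `(0, ∞)` takes every value strictly between its two end limits
exactly once, by the intermediate value theorem.
-/

open Filter Topology Set Real

theorem StrictMonoOn.existsUnique_eq_of_tendsto {f : ℝ → ℝ} {x₀ a b t : ℝ}
    (hcont : ContinuousOn f (Ioi x₀)) (hmono : StrictMonoOn f (Ioi x₀))
    (hbot : Tendsto f (𝓝[>] x₀) (𝓝 a)) (htop : Tendsto f atTop (𝓝 b)) (hat : a < t)
    (htb : t < b) : ∃! x, x₀ < x ∧ f x = t := by
  obtain ⟨x, hx, hfx⟩ := isPreconnected_Ioi.intermediate_value_Ioo (l₁ := 𝓝[>] x₀) inf_le_right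
    (le_principal_iff.2 (Ioi_mem_atTop x₀)) hcont hbot htop ⟨hat, htb⟩
  exact ⟨x, ⟨hx, hfx⟩, fun y ⟨hy, hfy⟩ => hmono.injOn hy hx (hfy.trans hfx.symm)⟩

lemma continuousOn_exp_neg_div (c : ℝ) : ContinuousOn (fun σ => exp (-c / σ)) (Ioi 0) :=
  continuous_exp.comp_continuousOn (continuousOn_const.div continuousOn_id fun _ h => h.ne')

lemma monotoneOn_exp_neg_div {c : ℝ} (hc : 0 ≤ c) :
    MonotoneOn (fun σ => exp (-c / σ)) (Ioi 0) := fun a ha _ _ hab => by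
  simp only [neg_div, exp_le_exp, neg_le_neg_iff]
  exact div_le_div_of_nonneg_left hc ha hab

lemma strictMonoOn_exp_neg_div {c : ℝ} (hc : 0 < c) :
    StrictMonoOn (fun σ => exp (-c / σ)) (Ioi 0) := fun a ha _ _ hab => by
  simp only [neg_div, exp_lt_exp, neg_lt_neg_iff]
  exact div_lt_div_of_pos_left hc ha hab

lemma tendsto_exp_neg_div_nhdsGT_zero {c : ℝ} (hc : 0 < c) :
    Tendsto (fun σ => exp (-c / σ)) (𝓝[>] 0) (𝓝 0) := by
  have : Tendsto (fun σ => c / σ) (𝓝[>] 0) atTop := by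
    simpa only [div_eq_mul_inv] using tendsto_inv_nhdsGT_zero.const_mul_atTop hc
  simpa only [Function.comp_def, neg_div] using tendsto_exp_neg_atTop_nhds_zero.comp this

lemma tendsto_exp_neg_div_atTop (c : ℝ) : Tendsto (fun σ => exp (-c / σ)) atTop (𝓝 1) := by
  simpa only [exp_zero, Function.comp_def, id] using
    (continuous_exp.tendsto 0).comp (tendsto_const_nhds.div_atTop tendsto_id)

section
variable {ι : Type*} [Fintype ι] (c : ι → ℝ)

lemma continuousOn_sum_exp_neg_div : ContinuousOn (fun σ => ∑ j, exp (-c j / σ)) (Ioi 0) :=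
  continuousOn_finsetSum _ fun j _ => continuousOn_exp_neg_div (c j)

variable {c}

lemma strictMonoOn_sum_exp_neg_div (hc : ∀ j, 0 ≤ c j) (hpos : ∃ j, 0 < c j) :
    StrictMonoOn (fun σ => ∑ j, exp (-c j / σ)) (Ioi 0) := fun a ha b hb hab => by
  obtain ⟨i, hi⟩ := hpos
  exact Finset.sum_lt_sum (fun j _ => monotoneOn_exp_neg_div (hc j) ha hb hab.le)
    ⟨i, Finset.mem_univ i, strictMonoOn_exp_neg_div hi ha hb hab⟩

lemma tendsto_sum_exp_neg_div_nhdsGT_zero (hc : ∀ j, 0 ≤ c j) :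
    Tendsto (fun σ => ∑ j, exp (-c j / σ)) (𝓝[>] 0)
      (𝓝 (Finset.univ.filter fun j => c j = 0).card) := by
  rw [Finset.natCast_card_filter]
  refine tendsto_finsetSum _ fun j _ => ?_
  rcases (hc j).eq_or_lt with h | h
  · simp [← h]
  · simpa [h.ne'] using tendsto_exp_neg_div_nhdsGT_zero h

lemma tendsto_sum_exp_neg_div_atTop :
    Tendsto (fun σ => ∑ j, exp (-c j / σ)) atTop (𝓝 (Fintype.card ι)) := by
  simpa using tendsto_finsetSum Finset.univ fun j _ => tendsto_exp_neg_div_atTop (c j)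

end

theorem umap_bandwidth_exists_unique_general {k : ℕ} (dist : Fin k → ℝ)
    (ρ : ℝ) (hex : ∃ j, ρ < dist j) :
    let f : ℝ → ℝ := fun σ => ∑ j, Real.exp (-max 0 (dist j - ρ) / σ)
    let m : ℕ := (Finset.univ.filter fun j => dist j ≤ ρ).card
    ContinuousOn f (Set.Ioi 0) ∧
    StrictMonoOn f (Set.Ioi 0) ∧
    Tendsto f (nhdsWithin 0 (Set.Ioi 0)) (nhds (m : ℝ)) ∧
    Tendsto f atTop (nhds (k : ℝ)) ∧
    ∀ t : ℝ, (m : ℝ) < t → t < (k : ℝ) → ∃! σ : ℝ, 0 < σ ∧ f σ = t := by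
  intro f m
  set c : Fin k → ℝ := fun j => max 0 (dist j - ρ)
  have hc : ∀ j, 0 ≤ c j := fun j => le_max_left _ _
  have hm : (Finset.univ.filter fun j => c j = 0) = Finset.univ.filter fun j => dist j ≤ ρ :=
    Finset.filter_congr fun j _ => by simp [c]
  have hcont : ContinuousOn f (Ioi 0) := continuousOn_sum_exp_neg_div c
  have hmono : StrictMonoOn f (Ioi 0) :=
    strictMonoOn_sum_exp_neg_div hc (hex.imp fun j hj => lt_max_of_lt_right (sub_pos.2 hj))
  have hbot : Tendsto f (𝓝[>] 0) (𝓝 (m : ℝ)) := by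
    simpa only [hm] using tendsto_sum_exp_neg_div_nhdsGT_zero hc
  have htop : Tendsto f atTop (𝓝 (k : ℝ)) := by
    simpa using tendsto_sum_exp_neg_div_atTop (c := c)
  exact ⟨hcont, hmono, hbot, htop, fun t hmt htk =>
    hmono.existsUnique_eq_of_tendsto hcont hbot htop hmt htk⟩

/-- given distances `d_1,…,d_k ≥ 0`, `ρ ≥ 0` with some `d_j > ρ`,
the function `f(σ) = ∑_j exp(−max(0, d_j − ρ)/σ)` is continuous and strictly
increasing on `(0,∞)`, tends to `m = #{j : d_j ≤ ρ}` as `σ → 0⁺` and to `k` as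
`σ → ∞`; hence for every `t` with `m < t < k` there is a unique `σ > 0` with
`f(σ) = t`.  This is the existence/uniqueness of UMAP's bandwidth `σ_i`. -/
theorem umap_bandwidth_exists_unique {k : ℕ} (dist : Fin k → ℝ)
    (hdist : ∀ j, 0 ≤ dist j) (ρ : ℝ) (hρ : 0 ≤ ρ) (hex : ∃ j, ρ < dist j) :
    let f : ℝ → ℝ := fun σ => ∑ j, Real.exp (-max 0 (dist j - ρ) / σ)
    let m : ℕ := (Finset.univ.filter fun j => dist j ≤ ρ).card
    ContinuousOn f (Set.Ioi 0) ∧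
    StrictMonoOn f (Set.Ioi 0) ∧
    Tendsto f (nhdsWithin 0 (Set.Ioi 0)) (nhds (m : ℝ)) ∧
    Tendsto f atTop (nhds (k : ℝ)) ∧
    ∀ t : ℝ, (m : ℝ) < t → t < (k : ℝ) → ∃! σ : ℝ, 0 < σ ∧ f σ = t :=
  umap_bandwidth_exists_unique_general dist ρ hex
end

section
/- Let V = (v_{ab}) ∈ ℝ^{n×n} be symmetric with nonnegative entries and degrees d_a = ∑_b v_{ab}, let Φ be any map assigning to each pair of embedding points a value in (0,1), let n_neg ∈ ℕ, and for each ordered pair (a,b) define the per-step stochastic loss ℓ(a,b) = −log Φ(y_a,y_b) + n_neg · (1/n) ∑_{c=1}^n (−log(1 − Φ(y_a,y_c))), where the negative index c is drawn uniformly. Then the expectation of ℓ under sampling the positive edge (a,b) with weight v_{ab} satisfies ∑_{a,b} v_{ab} · ℓ(a,b) = −∑_{a,b} v_{ab} log Φ(y_a,y_b) + (n_neg/n) ∑_a d_a ∑_c (−log(1 − Φ(y_a,y_c))). -/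
open Matrix

/-- for symmetric nonnegative `V` with degrees `d_a = ∑_b v_{ab}`,
kernel values `Φ a b ∈ (0,1)`, and per-step negative-sampling loss
`ℓ(a,b) = −log Φ(y_a,y_b) + n_neg · (1/n) ∑_c (−log(1 − Φ(y_a,y_c)))`,
the expectation over sampling the positive edge `(a,b)` with weight `v_{ab}`
separates into an attraction term over edges and a degree-weighted repulsion:
`∑_{a,b} v_{ab} ℓ(a,b) = −∑_{a,b} v_{ab} log Φ(y_a,y_b)
  + (n_neg/n) ∑_a d_a ∑_c (−log(1 − Φ(y_a,y_c)))`. -/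
theorem umap_negative_sampling_expected_loss {n : ℕ} (hn : 0 < n)
    (V : Matrix (Fin n) (Fin n) ℝ) (hsymm : V.IsSymm) (hnonneg : ∀ a b, 0 ≤ V a b)
    (Φ : Fin n → Fin n → ℝ) (hΦ : ∀ a b, Φ a b ∈ Set.Ioo (0 : ℝ) 1)
    (nneg : ℕ) (ℓ : Fin n → Fin n → ℝ)
    (hℓ : ∀ a b, ℓ a b =
      -Real.log (Φ a b) + (nneg : ℝ) * ((1 / (n : ℝ)) * ∑ c, -Real.log (1 - Φ a c))) :
    ∑ a, ∑ b, V a b * ℓ a b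
      = -(∑ a, ∑ b, V a b * Real.log (Φ a b))
        + ((nneg : ℝ) / (n : ℝ)) * ∑ a, (∑ b, V a b) * ∑ c, -Real.log (1 - Φ a c) := by
  simp only [hℓ, mul_add, Finset.sum_add_distrib, Finset.sum_neg_distrib, mul_neg]
  rw [Finset.mul_sum]
  congr 1
  rw [neg_inj]
  apply Finset.sum_congr rfl
  intro a _
  rw [← Finset.sum_mul]
  ring
end
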